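/- For every integer m ≥ 1, the 2m-th Bernoulli number satisfies B_{2m} = ((-1)^{m-1} / 2^{2m+1}) · ∫_{-∞}^{+∞} ( d^{m-1}/dx^{m-1} (sech x)² )² dx, where the integrand is the square of the (m-1)-st derivative of the function x ↦ sech² x = (1/cosh x)² on the real line. -/

import Mathlib

/-!
Write `σ` for the logistic sigmoid. Then `sech² x = 4 σ'(2x)`, and every derivative of `σ` is a
polynomial in `σ`: `σ⁽ⁿ⁾ = Pₙ(σ)` with `P₀ = X` and `Pₙ₊₁ = X(1 - X)Pₙ'`. Since `σ' = σ(1 - σ)`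
and `Pₘ = X(1 - X)Pₘ₋₁'`, the substitution `u = σ(t)` turns `∫ Pₘ(σ t)² dt` into
`∫₀¹ Pₘ Pₘ₋₁' du`. As `Pₖ` vanishes at `0` and `1` for `k ≥ 1`, integrating by parts `m - 1`
times gives `(-1)^(m-1) ∫₀¹ P₂ₘ₋₁ du`. Finally, expanding `Pₙ` in powers of `X` (its coefficients
are signed Stirling numbers of the second kind) gives `∫₀¹ Pₙ = Σₖ (-1)ᵏ k! S(n+1, k+1)/(k+2)`,
and this sum satisfies the recurrence `Σ_{k<n} C(n,k) B'ₖ = n` of the Bernoulli numbers `B'ₖ`.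
-/

open Finset Nat

namespace Nat

theorem sum_range_choose_mul_stirlingSecond (n k : ℕ) :
    ∑ q ∈ range (n + 1), n.choose q * stirlingSecond q k = stirlingSecond (n + 1) (k + 1) := by
  induction n generalizing k with
  | zero => simp [stirlingSecond_succ_succ]
  | succ n ih =>
    have hshift : ∑ q ∈ range (n + 1), n.choose q * stirlingSecond (q + 1) k =
        k * stirlingSecond (n + 1) (k + 1) + stirlingSecond (n + 1) k := by
      rcases k with _ | k
      · simp
      · have hterm (q : ℕ) : n.choose q * stirlingSecond (q + 1) (k + 1) =
            (k + 1) * (n.choose q * stirlingSecond q (k + 1)) + n.choose q * stirlingSecond q k := by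
          rw [stirlingSecond_succ_succ]; ring
        simp only [hterm, sum_add_distrib, ← mul_sum, ih]
    have hpascal : ∑ q ∈ range (n + 2), (n + 1).choose q * stirlingSecond q k =
        ∑ q ∈ range (n + 2), n.choose q * stirlingSecond q k +
          ∑ q ∈ range (n + 1), n.choose q * stirlingSecond (q + 1) k := by
      rw [sum_range_succ' _ (n + 1), sum_range_succ' (fun q => n.choose q * _) (n + 1)]
      simp only [choose_succ_succ', add_mul, sum_add_distrib, choose_zero_right]
      ring
    rw [hpascal, hshift, sum_range_succ, choose_succ_self, zero_mul, add_zero, ih,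
      stirlingSecond_succ_succ (n + 1)]
    ring

theorem sum_range_choose_succ_mul_stirlingSecond_succ (n k : ℕ) :
    ∑ j ∈ range n, (n + 1).choose (j + 1) * stirlingSecond (j + 1) (k + 1) =
      (k + 2) * stirlingSecond (n + 1) (k + 2) := by
  have h := sum_range_choose_mul_stirlingSecond (n + 1) (k + 1)
  rw [sum_range_succ, sum_range_succ', choose_self, stirlingSecond_succ_succ (n + 1) (k + 1)] at h
  simpa using h

theorem sum_range_neg_one_pow_mul_factorial_mul_stirlingSecond (n : ℕ) :
    ∑ k ∈ range n, (-1 : ℤ) ^ k * k ! * stirlingSecond (n + 1) (k + 2) = n := by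
  induction n with
  | zero => simp
  | succ n ih =>
    set f : ℕ → ℤ := fun k => (-1) ^ k * k ! * stirlingSecond (n + 1) (k + 1)
    have hterm (k : ℕ) : (-1 : ℤ) ^ k * k ! * stirlingSecond (n + 1 + 1) (k + 2) =
        (-1) ^ k * k ! * stirlingSecond (n + 1) (k + 2) + (f k - f (k + 1)) := by
      simp only [f, stirlingSecond_succ_succ (n + 1) (k + 1), factorial_succ]
      push_cast
      ring
    rw [sum_congr rfl fun k _ => hterm k, sum_add_distrib, sum_range_succ, ih, sum_range_sub']
    simp [f, stirlingSecond_eq_zero_of_lt, stirlingSecond_one_right]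

end Nat

theorem eq_bernoulli'_succ_of_sum_range_choose_mul (c : ℕ → ℚ)
    (hc : ∀ n, ∑ j ∈ range n, ((n + 1).choose (j + 1) : ℚ) * c j = n) (n : ℕ) :
    c n = bernoulli' (n + 1) := by
  have hb (n : ℕ) : ∑ j ∈ range n, ((n + 1).choose (j + 1) : ℚ) * bernoulli' (j + 1) = n := by
    have h := sum_bernoulli' (n + 1)
    rw [sum_range_succ'] at h
    push_cast at h
    simpa using h
  induction n using Nat.strong_induction_on with
  | _ n ih =>
    have h := (hc (n + 1)).trans (hb (n + 1)).symm
    rw [sum_range_succ, sum_range_succ, sum_congr rfl fun j hj => by rw [ih j (mem_range.1 hj)],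
      add_right_inj, choose_succ_self_right] at h
    exact mul_left_cancel₀ (by positivity) h

theorem bernoulli'_succ_eq_sum_stirlingSecond (n : ℕ) :
    bernoulli' (n + 1) =
      ∑ k ∈ range (n + 1), (-1 : ℚ) ^ k * k ! * stirlingSecond (n + 1) (k + 1) / (k + 2) := by
  refine (eq_bernoulli'_succ_of_sum_range_choose_mul (fun n => ∑ k ∈ range (n + 1),
    (-1 : ℚ) ^ k * k ! * stirlingSecond (n + 1) (k + 1) / (k + 2)) (fun n => ?_) n).symm
  have hext (j : ℕ) (hj : j ∈ range n) :
      ∑ k ∈ range (j + 1), (-1 : ℚ) ^ k * k ! * stirlingSecond (j + 1) (k + 1) / (k + 2) =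
        ∑ k ∈ range n, (-1 : ℚ) ^ k * k ! * stirlingSecond (j + 1) (k + 1) / (k + 2) := by
    refine sum_subset (by simpa using hj) fun k _ hk => ?_
    rw [stirlingSecond_eq_zero_of_lt (by simpa using hk)]
    simp
  have hinner (k : ℕ) : ∑ j ∈ range n, ((n + 1).choose (j + 1) : ℚ) *
      ((-1) ^ k * k ! * stirlingSecond (j + 1) (k + 1) / (k + 2)) =
      (-1) ^ k * k ! * stirlingSecond (n + 1) (k + 2) := by
    have h := congrArg (Nat.cast (R := ℚ)) (sum_range_choose_succ_mul_stirlingSecond_succ n k)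
    push_cast at h
    calc _ = (-1) ^ k * k ! / (k + 2) *
          ∑ j ∈ range n, ((n + 1).choose (j + 1) : ℚ) * stirlingSecond (j + 1) (k + 1) := by
          rw [mul_sum]; exact sum_congr rfl fun j _ => by ring
      _ = _ := by rw [h]; field_simp
  rw [sum_congr rfl fun j hj => by rw [hext j hj, mul_sum], sum_comm]
  simp only [hinner]
  exact_mod_cast sum_range_neg_one_pow_mul_factorial_mul_stirlingSecond n

section

open Polynomial

noncomputable def sigmoidDerivPoly (R : Type*) [CommRing R] : ℕ → R[X]
  | 0 => X
  | n + 1 => X * (1 - X) * derivative (sigmoidDerivPoly R n)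

section CommRing

variable {R : Type*} [CommRing R]

theorem sigmoidDerivPoly_succ (n : ℕ) :
    sigmoidDerivPoly R (n + 1) = X * (1 - X) * derivative (sigmoidDerivPoly R n) := rfl

@[simp]
theorem sigmoidDerivPoly_succ_eval_zero (n : ℕ) : (sigmoidDerivPoly R (n + 1)).eval 0 = 0 := by
  simp [sigmoidDerivPoly_succ]

@[simp]
theorem sigmoidDerivPoly_succ_eval_one (n : ℕ) : (sigmoidDerivPoly R (n + 1)).eval 1 = 0 := by
  simp [sigmoidDerivPoly_succ]

theorem sigmoidDerivPoly_eq_sum (n : ℕ) : sigmoidDerivPoly R n = ∑ k ∈ range (n + 1),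
    C ((-1) ^ k * k ! * stirlingSecond (n + 1) (k + 1) : R) * X ^ (k + 1) := by
  induction n with
  | zero => simp [sigmoidDerivPoly, stirlingSecond_self]
  | succ n ih =>
    set c : ℕ → R := fun k => (-1) ^ k * k ! * stirlingSecond (n + 1) (k + 1)
    have hterm (k : ℕ) : X * (1 - X) * derivative (C (c k) * X ^ (k + 1)) =
        C ((k + 1) * c k) * X ^ (k + 1) - C ((k + 1) * c k) * X ^ (k + 2) := by
      simp only [derivative_C_mul_X_pow, C_mul]; push_cast; ring
    have hsplit : ∑ k ∈ range (n + 2),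
        C ((-1) ^ k * k ! * stirlingSecond (n + 2) (k + 1) : R) * X ^ (k + 1) =
        ∑ k ∈ range (n + 2), C ((k + 1) * c k) * X ^ (k + 1) +
          ∑ k ∈ range (n + 2), C ((-1) ^ k * k ! * stirlingSecond (n + 1) k : R) * X ^ (k + 1) := by
      rw [← sum_add_distrib]
      refine sum_congr rfl fun k _ => ?_
      simp only [c, stirlingSecond_succ_succ (n + 1) k, ← add_mul, ← C_add]
      push_cast
      congr 2
      ring
    rw [sigmoidDerivPoly_succ, ih, derivative_sum, mul_sum, sum_congr rfl fun k _ => hterm k,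
      sum_sub_distrib, hsplit, sum_range_succ _ (n + 1), sum_range_succ' _ (n + 1)]
    simp only [c, stirlingSecond_eq_zero_of_lt (lt_add_one (n + 1)), stirlingSecond_succ_zero,
      cast_zero, mul_zero, map_zero, zero_mul, add_zero, sub_eq_add_neg, ← sum_neg_distrib]
    congr 1
    refine sum_congr rfl fun k _ => ?_
    simp only [factorial_succ, pow_succ, ← neg_mul, ← C_neg]
    push_cast
    congr 2
    ring

end CommRing

open Real MeasureTheory

theorem iteratedDeriv_sigmoid (n : ℕ) :
    iteratedDeriv n sigmoid = fun t => (sigmoidDerivPoly ℝ n).eval (sigmoid t) := by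
  induction n with
  | zero => simp [sigmoidDerivPoly]
  | succ n ih =>
    funext t
    have hderiv : HasDerivAt (fun t => (sigmoidDerivPoly ℝ n).eval (sigmoid t))
        ((derivative (sigmoidDerivPoly ℝ n)).eval (sigmoid t) * (sigmoid t * (1 - sigmoid t))) t :=
      ((sigmoidDerivPoly ℝ n).hasDerivAt (sigmoid t)).comp t (hasDerivAt_sigmoid t)
    rw [iteratedDeriv_succ, ih, hderiv.deriv, sigmoidDerivPoly_succ]
    simp only [eval_mul, eval_sub, eval_one, eval_X]
    ring

theorem integral_eval_sigmoidDerivPoly (n : ℕ) :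
    ∫ x in (0 : ℝ)..1, (sigmoidDerivPoly ℝ n).eval x = bernoulli' (n + 1) := by
  simp only [sigmoidDerivPoly_eq_sum, eval_finsetSum, eval_mul, eval_C, eval_pow, eval_X]
  rw [intervalIntegral.integral_finsetSum fun k _ =>
    ((continuous_pow (k + 1)).const_mul _).intervalIntegrable _ _,
    bernoulli'_succ_eq_sum_stirlingSecond]
  push_cast
  refine sum_congr rfl fun k _ => ?_
  rw [intervalIntegral.integral_const_mul, integral_pow]
  push_cast
  field_simp
  ring

theorem integral_sigmoidDerivPoly_mul_derivative_succ (a b : ℕ) :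
    ∫ x in (0 : ℝ)..1,
        (sigmoidDerivPoly ℝ (a + 1)).eval x * (derivative (sigmoidDerivPoly ℝ (b + 1))).eval x =
      -∫ x in (0 : ℝ)..1,
        (sigmoidDerivPoly ℝ (a + 2)).eval x * (derivative (sigmoidDerivPoly ℝ b)).eval x := by
  rw [intervalIntegral.integral_mul_deriv_eq_deriv_mul (fun x _ => Polynomial.hasDerivAt _ x)
    (fun x _ => Polynomial.hasDerivAt _ x) ((Polynomial.continuous _).intervalIntegrable _ _)
    ((Polynomial.continuous _).intervalIntegrable _ _)]
  simp only [sigmoidDerivPoly_succ_eval_zero, sigmoidDerivPoly_succ_eval_one, zero_mul, sub_zero,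
    zero_sub, sigmoidDerivPoly_succ (a + 1), sigmoidDerivPoly_succ b, eval_mul, eval_sub, eval_one,
    eval_X]
  congr 2 with x
  ring

theorem integral_sigmoidDerivPoly_mul_derivative_add (a b k : ℕ) :
    ∫ x in (0 : ℝ)..1,
        (sigmoidDerivPoly ℝ (a + 1)).eval x * (derivative (sigmoidDerivPoly ℝ (b + k))).eval x =
      (-1) ^ k * ∫ x in (0 : ℝ)..1,
        (sigmoidDerivPoly ℝ (a + k + 1)).eval x * (derivative (sigmoidDerivPoly ℝ b)).eval x := by
  induction k generalizing a with
  | zero => simp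
  | succ k ih =>
    rw [← add_assoc, integral_sigmoidDerivPoly_mul_derivative_succ, ih (a + 1), pow_succ]
    ring_nf

theorem integral_sigmoid_mul_one_sub_sigmoid_smul {E : Type*} [NormedAddCommGroup E]
    [NormedSpace ℝ E] (g : ℝ → E) :
    ∫ t, (sigmoid t * (1 - sigmoid t)) • g (sigmoid t) = ∫ u in (0 : ℝ)..1, g u := by
  have h := integral_image_eq_integral_abs_deriv_smul MeasurableSet.univ
    (fun t _ => (hasDerivAt_sigmoid t).hasDerivWithinAt) sigmoid_injective.injOn g
  rw [Set.image_univ, range_sigmoid, setIntegral_univ] at h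
  rw [intervalIntegral.integral_of_le zero_le_one, integral_Ioc_eq_integral_Ioo, h]
  congr 1 with t
  rw [abs_of_pos (mul_pos (sigmoid_pos t) (sub_pos.2 (sigmoid_lt_one t)))]

theorem integral_sq_eval_sigmoidDerivPoly_succ (n : ℕ) :
    ∫ t, ((sigmoidDerivPoly ℝ (n + 1)).eval (sigmoid t)) ^ 2 =
      (-1) ^ n * (bernoulli' (2 * n + 2) : ℝ) := by
  have hparts := integral_sigmoidDerivPoly_mul_derivative_add n 0 n
  rw [zero_add, show n + n + 1 = 2 * n + 1 by ring] at hparts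
  calc ∫ t, ((sigmoidDerivPoly ℝ (n + 1)).eval (sigmoid t)) ^ 2
      = ∫ t, (sigmoid t * (1 - sigmoid t)) • ((sigmoidDerivPoly ℝ (n + 1)).eval (sigmoid t) *
          (derivative (sigmoidDerivPoly ℝ n)).eval (sigmoid t)) := by
        congr 1 with t
        rw [sq]
        nth_rw 1 [sigmoidDerivPoly_succ]
        simp only [eval_mul, eval_sub, eval_one, eval_X, smul_eq_mul]
        ring
    _ = (-1) ^ n * ∫ u in (0 : ℝ)..1, (sigmoidDerivPoly ℝ (2 * n + 1)).eval u := by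
        rw [integral_sigmoid_mul_one_sub_sigmoid_smul (fun u => (sigmoidDerivPoly ℝ (n + 1)).eval u *
          (derivative (sigmoidDerivPoly ℝ n)).eval u), hparts]
        simp [sigmoidDerivPoly]
    _ = (-1) ^ n * bernoulli' (2 * n + 2) := by
        rw [integral_eval_sigmoidDerivPoly]

theorem one_div_cosh_sq (x : ℝ) :
    (1 / cosh x) ^ 2 = 4 * (sigmoid (2 * x) * (1 - sigmoid (2 * x))) := by
  have h : exp (-(2 * x)) = (exp x)⁻¹ ^ 2 := by rw [← exp_neg, ← exp_nat_mul]; ring_nf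
  rw [cosh_eq, sigmoid_def, h, exp_neg]
  field_simp
  ring

theorem iteratedDeriv_one_div_cosh_sq (n : ℕ) :
    iteratedDeriv n (fun x => (1 / cosh x) ^ 2) =
      fun x => 2 ^ (n + 2) * (sigmoidDerivPoly ℝ (n + 1)).eval (sigmoid (2 * x)) := by
  have h : (fun x => (1 / cosh x) ^ 2) = fun x => 4 * deriv sigmoid (2 * x) := by
    simp only [one_div_cosh_sq, deriv_sigmoid]
  funext x
  rw [h, iteratedDeriv_const_mul_field, iteratedDeriv_comp_const_mul
    (contDiff_sigmoid.of_le le_top).deriv', ← iteratedDeriv_succ', iteratedDeriv_sigmoid]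
  ring

theorem integral_sq_iteratedDeriv_one_div_cosh_sq (n : ℕ) :
    ∫ x, (iteratedDeriv n (fun x => (1 / cosh x) ^ 2) x) ^ 2 =
      2 ^ (2 * n + 3) * (-1) ^ n * (bernoulli' (2 * n + 2) : ℝ) := by
  simp_rw [iteratedDeriv_one_div_cosh_sq, mul_pow]
  rw [integral_const_mul, Measure.integral_comp_mul_left
    (fun t => ((sigmoidDerivPoly ℝ (n + 1)).eval (sigmoid t)) ^ 2),
    integral_sq_eval_sigmoidDerivPoly_succ, smul_eq_mul, abs_of_pos (by norm_num), ← pow_mul]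
  ring

end

open MeasureTheory Real

theorem bernoulli_sech_integral (m : ℕ) (hm : 1 ≤ m) :
    (bernoulli (2 * m) : ℝ) =
      ((-1 : ℝ) ^ (m - 1) / 2 ^ (2 * m + 1)) *
        ∫ x : ℝ, (iteratedDeriv (m - 1) (fun x : ℝ => (1 / Real.cosh x) ^ 2) x) ^ 2 := by
  obtain ⟨n, rfl⟩ : ∃ n, m = n + 1 := ⟨m - 1, by omega⟩
  rw [Nat.add_sub_cancel, integral_sq_iteratedDeriv_one_div_cosh_sq,
    ← bernoulli_eq_bernoulli'_of_ne_one (by omega)]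
  have hsign : ((-1 : ℝ) ^ n) ^ 2 = 1 := by rw [← pow_mul, pow_mul', neg_one_sq, one_pow]
  field_simp
  linear_combination (-(2 : ℝ) ^ (2 * n + 3) * (bernoulli (2 * n + 2) : ℝ)) * hsign
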